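/- Let N ≥ 5, A, B > 0, ε > 0, and λ₀ = ((N-2)A/(2B))^{1/(N-4)} ε^{-1/(N-4)}. Then there exists c₀ > 0 depending only on N and on upper and lower bounds for A, B, such that for f(λ) = A λ^{2-N} - B ε λ^{-2}: if (A/B)^{1/(N-4)} ε^{-1/(N-4)} λ^{-1} ≤ 2 (2/(N-2))^{1/(N-4)} then f(λ) - f(λ₀) ≥ c₀ ε (λ^{-1} - λ₀^{-1})², and otherwise f(λ) - f(λ₀) ≥ c₀ ε^{(N-2)/(N-4)}. -/

import Mathlib

/-!
In the variable `t = λ⁻¹` the function is `f = A t^(N-2) - B ε t²`, and `t₀ = λ₀⁻¹` is its critical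
point: `(N-2) A t₀^(N-2) = 2 B ε t₀²`. Writing `t = s t₀`, the elementary inequality
`(n-2)(s-1)² ≤ 2(sⁿ-1) - n(s²-1)` for `s ≥ 0` turns this into
`f(λ) - f(λ₀) ≥ (N-4)/(N-2) · B ε (t - t₀)²`, which is the first case. The threshold condition says
exactly `t ≤ 2 t₀`; beyond it `(t - t₀)² ≥ t₀²`, and `ε t₀²` is `ε^((N-2)/(N-4))` up to a factor
controlled by the bounds on `A` and `B`.
-/

open Real

lemma sub_one_mul_pow_sub_one_nonneg {s : ℝ} (hs : 0 ≤ s) (k : ℕ) : 0 ≤ (s - 1) * (s ^ k - 1) := by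
  rcases le_total 1 s with h | h
  · exact mul_nonneg (by linarith) (by linarith [one_le_pow₀ (n := k) h])
  · exact mul_nonneg_of_nonpos_of_nonpos (by linarith) (by linarith [pow_le_one₀ (n := k) hs h])

lemma sub_two_mul_sub_one_sq_le {s : ℝ} (hs : 0 ≤ s) (n : ℕ) :
    ((n : ℝ) - 2) * (s - 1) ^ 2 ≤ 2 * (s ^ n - 1) - n * (s ^ 2 - 1) := by
  rcases n with _ | n
  · simp only [CharP.cast_eq_zero, pow_zero]
    nlinarith [sq_nonneg (s - 1)]
  induction n with
  | zero => exact le_of_eq (by push_cast; ring)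
  | succ n ih =>
    -- passing from `n + 1` to `n + 2`, the gap between the sides grows by `2 s (s - 1) (sⁿ - 1)`
    have step := mul_nonneg hs (sub_one_mul_pow_sub_one_nonneg hs n)
    push_cast at ih ⊢
    linear_combination ih + 2 * step

lemma sub_two_mul_sq_le_of_critical {n : ℕ} {a b t t₀ : ℝ} (hb : 0 ≤ b) (ht₀ : 0 < t₀)
    (ht : 0 ≤ t) (hcrit : n * a * t₀ ^ n = 2 * b * t₀ ^ 2) :
    (n - 2) * b * (t - t₀) ^ 2 ≤ n * ((a * t ^ n - b * t ^ 2) - (a * t₀ ^ n - b * t₀ ^ 2)) := by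
  obtain ⟨s, hs, rfl⟩ : ∃ s, 0 ≤ s ∧ t = s * t₀ := ⟨t / t₀, by positivity, by field_simp⟩
  have key := mul_le_mul_of_nonneg_left (sub_two_mul_sub_one_sq_le hs n)
    (by positivity : 0 ≤ b * t₀ ^ 2)
  simp only [mul_pow]
  linear_combination key - (s ^ n - 1) * hcrit

lemma rpow_two_sub_natCast {x : ℝ} (hx : 0 < x) {n : ℕ} (hn : 2 ≤ n) :
    x ^ ((2 : ℝ) - n) = x⁻¹ ^ (n - 2) := by
  rw [show (2 : ℝ) - n = -((n - 2 : ℕ) : ℝ) by push_cast [Nat.cast_sub hn]; ring,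
    rpow_neg hx.le, rpow_natCast, inv_pow]

lemma rpow_neg_two (x : ℝ) : x ^ (-2 : ℝ) = x⁻¹ ^ 2 := by
  rw [rpow_neg_ofNat, zpow_neg, zpow_ofNat, inv_pow]

noncomputable def reducedEnergy (N : ℕ) (A B ε x : ℝ) : ℝ :=
  A * x ^ ((2 : ℝ) - N) - B * ε * x ^ (-2 : ℝ)

noncomputable def criticalScale (N : ℕ) (A B : ℝ) : ℝ := ((N : ℝ) - 2) * A / (2 * B)

noncomputable def criticalLam (N : ℕ) (A B ε : ℝ) : ℝ :=
  criticalScale N A B ^ (1 / ((N : ℝ) - 4)) * ε ^ (-1 / ((N : ℝ) - 4))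

section
variable {N : ℕ} {A B ε : ℝ}

lemma reducedEnergy_eq_inv_pow (hN : 2 ≤ N) {x : ℝ} (hx : 0 < x) :
    reducedEnergy N A B ε x = A * x⁻¹ ^ (N - 2) - B * ε * x⁻¹ ^ 2 := by
  rw [reducedEnergy, rpow_two_sub_natCast hx hN, rpow_neg_two]

lemma criticalScale_pos (hN : 2 < N) (hA : 0 < A) (hB : 0 < B) : 0 < criticalScale N A B := by
  have hN2 : (0 : ℝ) < N - 2 := sub_pos.2 (by exact_mod_cast hN)
  unfold criticalScale
  positivity

lemma criticalLam_inv (hε : 0 ≤ ε) :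
    (criticalLam N A B ε)⁻¹ =
      ε ^ (1 / ((N : ℝ) - 4)) / criticalScale N A B ^ (1 / ((N : ℝ) - 4)) := by
  rw [criticalLam, neg_div, rpow_neg hε, mul_inv, inv_inv, inv_mul_eq_div]

lemma criticalLam_inv_pos (hN : 2 < N) (hA : 0 < A) (hB : 0 < B) (hε : 0 < ε) :
    0 < (criticalLam N A B ε)⁻¹ := by
  have := criticalScale_pos hN hA hB
  rw [criticalLam_inv hε.le]
  positivity

lemma criticalLam_inv_pow (hN : 5 ≤ N) (hA : 0 < A) (hB : 0 < B) (hε : 0 < ε) :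
    (criticalLam N A B ε)⁻¹ ^ (N - 4) = ε / criticalScale N A B := by
  have hp : 1 / ((N : ℝ) - 4) = ((N - 4 : ℕ) : ℝ)⁻¹ := by
    rw [Nat.cast_sub (by omega)]; simp
  rw [criticalLam_inv hε.le, div_pow, hp, rpow_inv_natCast_pow hε.le (by omega),
    rpow_inv_natCast_pow (criticalScale_pos (by omega) hA hB).le (by omega)]

theorem sub_two_div_mul_sq_le_sub_reducedEnergy (hN : 5 ≤ N) (hA : 0 < A) (hB : 0 < B)
    (hε : 0 < ε) {x : ℝ} (hx : 0 < x) :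
    ((N : ℝ) - 4) / ((N : ℝ) - 2) * (B * ε) * (x⁻¹ - (criticalLam N A B ε)⁻¹) ^ 2 ≤
      reducedEnergy N A B ε x - reducedEnergy N A B ε (criticalLam N A B ε) := by
  have ht₀ := criticalLam_inv_pos (N := N) (by omega) hA hB hε
  set t₀ := (criticalLam N A B ε)⁻¹
  have hN2_cast : ((N - 2 : ℕ) : ℝ) = N - 2 := by rw [Nat.cast_sub (by omega)]; simp
  have hN2_pos : (0 : ℝ) < N - 2 := sub_pos.2 (by exact_mod_cast (by omega : 2 < N))
  have hcrit : ((N - 2 : ℕ) : ℝ) * A * t₀ ^ (N - 2) = 2 * (B * ε) * t₀ ^ 2 := by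
    rw [hN2_cast, show N - 2 = N - 4 + 2 by omega, pow_add, criticalLam_inv_pow hN hA hB hε,
      criticalScale]
    field_simp
  have key := sub_two_mul_sq_le_of_critical (by positivity) ht₀ (inv_pos.2 hx).le hcrit
  rw [hN2_cast] at key
  rw [reducedEnergy_eq_inv_pow (by omega) hx, reducedEnergy_eq_inv_pow (by omega) (inv_pos.1 ht₀),
    div_mul_eq_mul_div, div_mul_eq_mul_div, div_le_iff₀ hN2_pos]
  linarith

lemma two_mul_criticalLam_inv_lt (hN : 5 ≤ N) (hA : 0 < A) (hB : 0 < B) (hε : 0 < ε) {x : ℝ}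
    (h : 2 * (2 / ((N : ℝ) - 2)) ^ (1 / ((N : ℝ) - 4)) <
      (A / B) ^ (1 / ((N : ℝ) - 4)) * ε ^ (-1 / ((N : ℝ) - 4)) * x⁻¹) :
    2 * (criticalLam N A B ε)⁻¹ < x⁻¹ := by
  have hN2 : (0 : ℝ) < N - 2 := sub_pos.2 (by exact_mod_cast (by omega : 2 < N))
  have hc := criticalScale_pos (N := N) (by omega) hA hB
  rw [show 2 / ((N : ℝ) - 2) = (A / B) / criticalScale N A B by unfold criticalScale; field_simp,
    div_rpow (by positivity) hc.le, neg_div, rpow_neg hε.le] at h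
  rw [criticalLam_inv hε.le]
  have ha : 0 < (A / B) ^ (1 / ((N : ℝ) - 4)) := by positivity
  have hu : 0 < ε ^ (1 / ((N : ℝ) - 4)) := by positivity
  have hcp : 0 < criticalScale N A B ^ (1 / ((N : ℝ) - 4)) := by positivity
  generalize (A / B) ^ (1 / ((N : ℝ) - 4)) = a at h ha
  generalize ε ^ (1 / ((N : ℝ) - 4)) = u at h hu ⊢
  generalize criticalScale N A B ^ (1 / ((N : ℝ) - 4)) = c at h hcp ⊢
  calc 2 * (u / c) = u / a * (2 * (a / c)) := by field_simp
    _ < u / a * (a * u⁻¹ * x⁻¹) := by gcongr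
    _ = x⁻¹ := by field_simp

lemma rpow_eq_mul_sq_criticalLam_inv (hN : 5 ≤ N) (hA : 0 < A) (hB : 0 < B) (hε : 0 < ε) :
    ε ^ (((N : ℝ) - 2) / ((N : ℝ) - 4)) =
      ε * (criticalScale N A B ^ (1 / ((N : ℝ) - 4)) * (criticalLam N A B ε)⁻¹) ^ 2 := by
  have hN4 : (0 : ℝ) < N - 4 := sub_pos.2 (by exact_mod_cast (by omega : 4 < N))
  have hc := criticalScale_pos (N := N) (by omega) hA hB
  rw [criticalLam_inv hε.le, mul_div_cancel₀ _ (by positivity),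
    show ((N : ℝ) - 2) / (N - 4) = 1 + 1 / (N - 4) * 2 by field_simp; ring,
    rpow_add hε, rpow_one, rpow_mul hε.le, rpow_two]

lemma rpow_le_mul_sq_sub_of_two_mul_lt (hN : 5 ≤ N) (hA : 0 < A) (hB : 0 < B) (hε : 0 < ε)
    {x : ℝ} (hx : 2 * (criticalLam N A B ε)⁻¹ < x⁻¹) :
    ε ^ (((N : ℝ) - 2) / ((N : ℝ) - 4)) ≤
      (criticalScale N A B ^ (1 / ((N : ℝ) - 4))) ^ 2 *
        (ε * (x⁻¹ - (criticalLam N A B ε)⁻¹) ^ 2) := by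
  have ht₀ := criticalLam_inv_pos (N := N) (by omega) hA hB hε
  rw [rpow_eq_mul_sq_criticalLam_inv hN hA hB hε, mul_pow, mul_left_comm]
  gcongr
  linarith

end

theorem exists_pos_le_and_mul_rpow_sq_le {N : ℕ} (hN : 5 ≤ N) {m M : ℝ} (hm : 0 < m) :
    ∃ c₀ > 0, ∀ A B : ℝ, 0 ≤ A → A ≤ M → m ≤ B →
      c₀ ≤ ((N : ℝ) - 4) / ((N : ℝ) - 2) * B ∧
      c₀ * (criticalScale N A B ^ (1 / ((N : ℝ) - 4))) ^ 2 ≤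
        ((N : ℝ) - 4) / ((N : ℝ) - 2) * B := by
  have hN2 : (0 : ℝ) < N - 2 := sub_pos.2 (by exact_mod_cast (by omega : 2 < N))
  have hN4 : (0 : ℝ) < N - 4 := sub_pos.2 (by exact_mod_cast (by omega : 4 < N))
  set C := (max 1 (((N : ℝ) - 2) * M / (2 * m))) ^ (1 / ((N : ℝ) - 4))
  have hC : 1 ≤ C := one_le_rpow (le_max_left _ _) (by positivity)
  refine ⟨(N - 4) / (N - 2) * m / C ^ 2, by positivity, fun A B hA hAM hmB => ?_⟩
  have hc₀ : (N - 4) / (N - 2) * m / C ^ 2 * C ^ 2 ≤ ((N : ℝ) - 4) / ((N : ℝ) - 2) * B := by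
    rw [div_mul_cancel₀ _ (by positivity)]
    gcongr
  have hB : 0 < B := hm.trans_le hmB
  have hM : 0 ≤ M := hA.trans hAM
  have hc : 0 ≤ criticalScale N A B := by unfold criticalScale; positivity
  have hcC : criticalScale N A B ^ (1 / ((N : ℝ) - 4)) ≤ C := by
    refine rpow_le_rpow hc (le_max_of_le_right ?_) (by positivity)
    unfold criticalScale
    gcongr
  constructor
  · exact le_trans (le_mul_of_one_le_right (by positivity) (one_le_pow₀ hC)) hc₀
  · have := rpow_nonneg hc (1 / ((N : ℝ) - 4))
    refine le_trans ?_ hc₀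
    gcongr

theorem stmt_7_general (N : ℕ) (hN : 5 ≤ N) (m M : ℝ) (hm : 0 < m) :
    ∃ c₀ > 0, ∀ A B ε lam : ℝ, m ≤ A → A ≤ M → m ≤ B → B ≤ M → 0 < ε → 0 < lam →
      ∀ lam0 : ℝ,
        lam0 = (((N : ℝ) - 2) * A / (2 * B)) ^ (1 / ((N : ℝ) - 4)) * ε ^ (-1 / ((N : ℝ) - 4)) →
        ((A / B) ^ (1 / ((N : ℝ) - 4)) * ε ^ (-1 / ((N : ℝ) - 4)) * lam⁻¹ ≤
            2 * (2 / ((N : ℝ) - 2)) ^ (1 / ((N : ℝ) - 4)) →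
          c₀ * ε * (lam⁻¹ - lam0⁻¹) ^ 2 ≤
            (A * lam ^ ((2 : ℝ) - N) - B * ε * lam ^ (-2 : ℝ)) -
              (A * lam0 ^ ((2 : ℝ) - N) - B * ε * lam0 ^ (-2 : ℝ))) ∧
        (2 * (2 / ((N : ℝ) - 2)) ^ (1 / ((N : ℝ) - 4)) <
            (A / B) ^ (1 / ((N : ℝ) - 4)) * ε ^ (-1 / ((N : ℝ) - 4)) * lam⁻¹ →
          c₀ * ε ^ (((N : ℝ) - 2) / ((N : ℝ) - 4)) ≤
            (A * lam ^ ((2 : ℝ) - N) - B * ε * lam ^ (-2 : ℝ)) -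
              (A * lam0 ^ ((2 : ℝ) - N) - B * ε * lam0 ^ (-2 : ℝ))) := by
  obtain ⟨c₀, hc₀, hc₀_le⟩ := exists_pos_le_and_mul_rpow_sq_le (M := M) hN hm
  refine ⟨c₀, hc₀, fun A B ε lam hmA hAM hmB _ hε hlam lam0 hlam0 => ?_⟩
  obtain rfl : lam0 = criticalLam N A B ε := hlam0
  have hA : 0 < A := hm.trans_le hmA
  have hB : 0 < B := hm.trans_le hmB
  obtain ⟨hnear, hfar⟩ := hc₀_le A B hA.le hAM hmB
  have hsq : 0 ≤ ε * (lam⁻¹ - (criticalLam N A B ε)⁻¹) ^ 2 := by positivity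
  have hgrowth := sub_two_div_mul_sq_le_sub_reducedEnergy hN hA hB hε hlam
  simp only [← reducedEnergy.eq_1]
  refine ⟨fun _ => ?_, fun h => ?_⟩
  · linarith [mul_le_mul_of_nonneg_right hnear hsq]
  · have hε_le := rpow_le_mul_sq_sub_of_two_mul_lt hN hA hB hε
      (two_mul_criticalLam_inv_lt hN hA hB hε h)
    linarith [mul_le_mul_of_nonneg_left hε_le hc₀.le, mul_le_mul_of_nonneg_right hfar hsq]

theorem stmt_7 (N : ℕ) (hN : 5 ≤ N) (m M : ℝ) (hm : 0 < m) (hmM : m ≤ M) :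
    ∃ c₀ > 0, ∀ A B ε lam : ℝ, m ≤ A → A ≤ M → m ≤ B → B ≤ M → 0 < ε → 0 < lam →
      ∀ lam0 : ℝ,
        lam0 = (((N : ℝ) - 2) * A / (2 * B)) ^ (1 / ((N : ℝ) - 4)) * ε ^ (-1 / ((N : ℝ) - 4)) →
        ((A / B) ^ (1 / ((N : ℝ) - 4)) * ε ^ (-1 / ((N : ℝ) - 4)) * lam⁻¹ ≤
            2 * (2 / ((N : ℝ) - 2)) ^ (1 / ((N : ℝ) - 4)) →
          c₀ * ε * (lam⁻¹ - lam0⁻¹) ^ 2 ≤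
            (A * lam ^ ((2 : ℝ) - N) - B * ε * lam ^ (-2 : ℝ)) -
              (A * lam0 ^ ((2 : ℝ) - N) - B * ε * lam0 ^ (-2 : ℝ))) ∧
        (2 * (2 / ((N : ℝ) - 2)) ^ (1 / ((N : ℝ) - 4)) <
            (A / B) ^ (1 / ((N : ℝ) - 4)) * ε ^ (-1 / ((N : ℝ) - 4)) * lam⁻¹ →
          c₀ * ε ^ (((N : ℝ) - 2) / ((N : ℝ) - 4)) ≤
            (A * lam ^ ((2 : ℝ) - N) - B * ε * lam ^ (-2 : ℝ)) -
              (A * lam0 ^ ((2 : ℝ) - N) - B * ε * lam0 ^ (-2 : ℝ))) :=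
  stmt_7_general N hN m M hm
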